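/- arXiv:1007.4041 — 2 statements merged into one kernel-verified Lean document; each statement's English description precedes it below -/
import Mathlib

section
/- Let n, N, k be natural numbers with k ≥ 1. Let g : ℝⁿ → ℂ be of class C^k such that every partial derivative ∂^α g with |α| ≤ k has polynomial decay order N, and let f : ℝⁿ → ℂ be measurable with vanishing moments of order k and polynomial decay order N + k + n + 1. Then there exists a constant C, depending only on the decay constants of f and of the ∂^α g, such that for all x ∈ ℝⁿ and all t > 1: |(g * D_t f)(x)| ≤ C t^{−k} (1 + |x|)^{−N}. -/
open MeasureTheory

/-- The `L¹`-normalized dilation `D_t f (x) = tⁿ f(t • x)` on `ℝⁿ`. -/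
noncomputable def dil (n : ℕ) (t : ℝ) (f : EuclideanSpace ℝ (Fin n) → ℂ) :
    EuclideanSpace ℝ (Fin n) → ℂ :=
  fun x => (t : ℂ) ^ n * f (t • x)

/-- Convolution `(f * g)(x) = ∫ f(y) g(x − y) dy` on `ℝⁿ`. -/
noncomputable def conv (n : ℕ) (f g : EuclideanSpace ℝ (Fin n) → ℂ) :
    EuclideanSpace ℝ (Fin n) → ℂ :=
  fun x => ∫ y, f y * g (x - y)

/-- The monomial `x^α` associated to a multi-index `α`. -/
def mono (n : ℕ) (α : Fin n → ℕ) (x : EuclideanSpace ℝ (Fin n)) : ℂ :=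
  ∏ i, (x i : ℂ) ^ (α i)

/-- `f` has vanishing moments of order `k`: `∫ f(x) x^α dx = 0`, with absolute
convergence, for every multi-index `α` with `|α| ≤ k − 1`. -/
def VanishingMoments (n k : ℕ) (f : EuclideanSpace ℝ (Fin n) → ℂ) : Prop :=
  ∀ α : Fin n → ℕ, (∑ i, α i) + 1 ≤ k →
    Integrable (fun x => f x * mono n α x) ∧ (∫ x, f x * mono n α x) = 0

/-!
Substituting `y = z / t` gives `(g * D_t f)(x) = ∫ f(z) g(x - z / t) dz`. Since `f` has vanishing
moments of order `k`, the Taylor polynomial of degree `k - 1` of `g` at `x` integrates to zero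
against `f`, so only the Taylor remainder contributes. It is bounded by `‖D^k g‖` along the segment
from `x` to `x - z / t` times `(‖z‖ / t) ^ k`, and Peetre's inequality
`(1 + ‖x + v‖) ^ (-N) ≤ (1 + ‖x‖) ^ (-N) (1 + ‖v‖) ^ N` turns the decay of `D^k g` into the factor
`(1 + ‖x‖) ^ (-N) (1 + ‖z‖) ^ N`. The decay of `f` of order `N + k + n + 1` absorbs
`(1 + ‖z‖) ^ (N + k)` and leaves the integrable weight `(1 + ‖z‖) ^ (-(n + 1))`.
-/

open Finset Set
open scoped Nat

theorem one_add_norm_add_rpow_neg_le {E : Type*} [SeminormedAddCommGroup E] (x v : E) {r : ℝ}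
    (hr : 0 ≤ r) :
    (1 + ‖x + v‖) ^ (-r) ≤ (1 + ‖x‖) ^ (-r) * (1 + ‖v‖) ^ r := by
  have hpeetre : 1 + ‖x‖ ≤ (1 + ‖x + v‖) * (1 + ‖v‖) := by
    have htri := norm_sub_le (x + v) v
    rw [add_sub_cancel_right] at htri
    nlinarith [norm_nonneg (x + v), norm_nonneg v]
  have h := Real.rpow_le_rpow (by positivity) hpeetre hr
  rw [Real.mul_rpow (by positivity) (by positivity)] at h
  rw [Real.rpow_neg (by positivity), Real.rpow_neg (by positivity), inv_mul_eq_div,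
    inv_le_comm₀ (by positivity) (by positivity), inv_div, div_le_iff₀ (by positivity)]
  exact h

section Taylor

variable {E F : Type*} [NormedAddCommGroup E] [NormedSpace ℝ E]
  [NormedAddCommGroup F] [NormedSpace ℝ F]

/-- The Taylor polynomial of `g` at `x` of degree `k - 1`, as a function of the increment `w`. -/
noncomputable def taylorSum (g : E → F) (k : ℕ) (x w : E) : F :=
  ∑ j ∈ range k, (j ! : ℝ)⁻¹ • iteratedFDeriv ℝ j g x (fun _ => w)

theorem taylorSum_smul (g : E → F) (k : ℕ) (x : E) (c : ℝ) (w : E) :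
    taylorSum g k x (c • w) =
      ∑ j ∈ range k, ((j ! : ℝ)⁻¹ * c ^ j) • iteratedFDeriv ℝ j g x (fun _ => w) := by
  refine sum_congr rfl fun j _ => ?_
  have := (iteratedFDeriv ℝ j g x).map_smul_univ (fun _ => c) (fun _ => w)
  rw [this, prod_const, card_univ, Fintype.card_fin, smul_smul]

theorem iteratedDeriv_comp_add_smul {g : E → F} {k : ℕ} (hg : ContDiff ℝ k g) (x w : E)
    {i : ℕ} (hi : i ≤ k) (s : ℝ) :
    iteratedDeriv i (fun s : ℝ => g (x + s • w)) s =
      iteratedFDeriv ℝ i g (x + s • w) (fun _ => w) := by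
  have h := (ContinuousLinearMap.smulRight (1 : ℝ →L[ℝ] ℝ) w).iteratedFDeriv_comp_right
    (hg.comp (contDiff_const.add contDiff_id) : ContDiff ℝ k fun y => g (x + y)) s
    (mod_cast hi)
  rw [iteratedDeriv_eq_iteratedFDeriv]
  change iteratedFDeriv ℝ i ((g ∘ (x + ·)) ∘ ContinuousLinearMap.smulRight (1 : ℝ →L[ℝ] ℝ) w) s _
    = _
  rw [h]
  simp only [ContinuousMultilinearMap.compContinuousLinearMap_apply,
    ContinuousLinearMap.smulRight_apply, one_apply_eq_self, one_smul]
  exact congrArg (· fun _ => w) (iteratedFDeriv_comp_add_left (𝕜 := ℝ) (f := g) i x (s • w))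

theorem norm_sub_taylorSum_le {g : E → F} {k : ℕ} (hg : ContDiff ℝ k g) (x w : E) {B : ℝ}
    (hB : ∀ s ∈ Icc (0 : ℝ) 1, ‖iteratedFDeriv ℝ k g (x + s • w)‖ ≤ B) :
    ‖g (x + w) - taylorSum g k x w‖ ≤ B * ‖w‖ ^ k := by
  rcases k with _ | m
  · simpa [taylorSum] using hB 1 ⟨zero_le_one, le_rfl⟩
  have hB0 : 0 ≤ B := (norm_nonneg _).trans (hB 0 ⟨le_rfl, zero_le_one⟩)
  set γ : ℝ → F := fun s => g (x + s • w)
  have hγ : ContDiff ℝ (m + 1) γ := hg.comp (contDiff_const.add (contDiff_id.smul contDiff_const))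
  have hderiv : ∀ i ≤ m + 1, ∀ s ∈ Icc (0 : ℝ) 1,
      iteratedDerivWithin i γ (Icc 0 1) s = iteratedFDeriv ℝ i g (x + s • w) (fun _ => w) :=
    fun i hi s hs => by
      rw [iteratedDerivWithin_eq_iteratedDeriv (uniqueDiffOn_Icc zero_lt_one)
        (hγ.contDiffAt.of_le (mod_cast hi)) hs, iteratedDeriv_comp_add_smul hg x w hi]
  have hremainder := taylor_mean_remainder_bound (f := γ) (C := B * ‖w‖ ^ (m + 1)) zero_le_one
    hγ.contDiffOn ⟨zero_le_one, le_rfl⟩ fun s hs => by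
      rw [hderiv _ le_rfl s hs]
      exact (ContinuousMultilinearMap.le_opNorm_mul_pow_of_le _ (pi_norm_const_le w)).trans
        (by gcongr; exact hB s hs)
  have htaylor : taylorWithinEval γ m (Icc 0 1) 0 1 = taylorSum g (m + 1) x w := by
    rw [taylor_within_apply, taylorSum]
    refine sum_congr rfl fun j hj => ?_
    rw [hderiv j (mem_range.mp hj).le 0 ⟨le_rfl, zero_le_one⟩]
    simp
  have hγ1 : γ 1 = g (x + w) := by simp [γ]
  rw [hγ1, htaylor] at hremainder
  refine hremainder.trans ?_
  simpa using div_le_self (by positivity) (Nat.one_le_cast.mpr m.factorial_pos)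

theorem norm_sub_taylorSum_le_of_decay {g : E → F} {k : ℕ} (hg : ContDiff ℝ k g) {N C : ℝ}
    (hN : 0 ≤ N) (hgd : ∀ y, ‖iteratedFDeriv ℝ k g y‖ ≤ C * (1 + ‖y‖) ^ (-N)) (x w : E) :
    ‖g (x + w) - taylorSum g k x w‖ ≤ C * (1 + ‖x‖) ^ (-N) * (1 + ‖w‖) ^ N * ‖w‖ ^ k := by
  have hC : 0 ≤ C := by simpa using (norm_nonneg _).trans (hgd 0)
  refine norm_sub_taylorSum_le hg x w fun s hs => (hgd _).trans ?_
  have hsw : ‖s • w‖ ≤ ‖w‖ := by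
    rw [norm_smul, Real.norm_of_nonneg hs.1]
    exact mul_le_of_le_one_left (norm_nonneg w) hs.2
  calc C * (1 + ‖x + s • w‖) ^ (-N)
      ≤ C * ((1 + ‖x‖) ^ (-N) * (1 + ‖s • w‖) ^ N) := by
        gcongr; exact one_add_norm_add_rpow_neg_le x _ hN
    _ ≤ C * (1 + ‖x‖) ^ (-N) * (1 + ‖w‖) ^ N := by
        rw [← mul_assoc]; gcongr

theorem norm_mul_sub_taylorSum_le {f g : E → ℂ} {k : ℕ} (hg : ContDiff ℝ k g)
    {N r Cf Cg u : ℝ} (hN : 0 ≤ N) (hu0 : 0 ≤ u) (hu1 : u ≤ 1)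
    (hgd : ∀ y, ‖iteratedFDeriv ℝ k g y‖ ≤ Cg * (1 + ‖y‖) ^ (-N))
    (hfd : ∀ z, ‖f z‖ ≤ Cf * (1 + ‖z‖) ^ (-(N + k + r))) (x z : E) :
    ‖f z * (g (x - u • z) - taylorSum g k x ((-u) • z))‖ ≤
      Cf * Cg * u ^ k * (1 + ‖x‖) ^ (-N) * (1 + ‖z‖) ^ (-r) := by
  set Z := 1 + ‖z‖
  have hZ : 0 < Z := by positivity
  have huz : u * ‖z‖ ≤ ‖z‖ := mul_le_of_le_one_left (norm_nonneg z) hu1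
  have hCf : 0 ≤ Cf := by simpa using (norm_nonneg _).trans (hfd 0)
  have hCg : 0 ≤ Cg := by simpa using (norm_nonneg _).trans (hgd 0)
  have hR := norm_sub_taylorSum_le_of_decay hg hN hgd x ((-u) • z)
  rw [neg_smul, ← sub_eq_add_neg, norm_neg, norm_smul, Real.norm_of_nonneg hu0] at hR
  have hZpow : Z ^ (-(N + k + r)) * Z ^ N * Z ^ (k : ℝ) = Z ^ (-r) := by
    rw [← Real.rpow_add hZ, ← Real.rpow_add hZ]; ring_nf
  calc ‖f z * (g (x - u • z) - taylorSum g k x ((-u) • z))‖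
      ≤ Cf * Z ^ (-(N + k + r)) * (Cg * (1 + ‖x‖) ^ (-N) * Z ^ N * (u ^ k * Z ^ (k : ℝ))) := by
        rw [norm_mul, neg_smul]
        refine mul_le_mul (hfd z) (hR.trans ?_) (norm_nonneg _) (by positivity)
        rw [Real.rpow_natCast, mul_pow]
        gcongr <;> (simp only [Z]; linarith)
    _ = Cf * Cg * u ^ k * (1 + ‖x‖) ^ (-N) * Z ^ (-r) := by
        rw [← hZpow]; ring

end Taylor

section Euclidean

variable {n : ℕ}

theorem conv_dil_apply (f g : EuclideanSpace ℝ (Fin n) → ℂ) {t : ℝ} (ht : 0 < t)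
    (x : EuclideanSpace ℝ (Fin n)) :
    conv n g (dil n t f) x = ∫ z, f z * g (x - t⁻¹ • z) := by
  have hshift : conv n g (dil n t f) x = ∫ y, g (x - y) * dil n t f y := by
    rw [conv, ← integral_sub_left_eq_self _ volume x]
    simp only [sub_sub_cancel]
  have hdil := Measure.integral_comp_inv_smul_of_nonneg volume
    (fun y => g (x - y) * f (t • y)) ht.le
  simp only [smul_inv_smul₀ ht.ne', finrank_euclideanSpace_fin] at hdil
  calc conv n g (dil n t f) x = t ^ n • ∫ y, g (x - y) * f (t • y) := by
        rw [hshift, ← integral_smul]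
        refine integral_congr_ae (ae_of_all _ fun y => ?_)
        simp only [dil, Complex.real_smul]
        push_cast
        ring
    _ = ∫ z, f z * g (x - t⁻¹ • z) := by simp_rw [← hdil, mul_comm]

theorem sum_card_fiber_eq {j : ℕ} (r : Fin j → Fin n) : ∑ l, #{i | r i = l} = j := by
  rw [← card_eq_sum_card_fiberwise fun i _ => mem_univ (r i), card_univ, Fintype.card_fin]

theorem prod_apply_comp_eq_mono {j : ℕ} (r : Fin j → Fin n) (z : EuclideanSpace ℝ (Fin n)) :
    ((∏ i, z (r i) : ℝ) : ℂ) = mono n (fun l => #{i | r i = l}) z := by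
  rw [mono, Complex.ofReal_prod, ← prod_fiberwise univ r (fun i => (z (r i) : ℂ))]
  refine prod_congr rfl fun l _ => ?_
  rw [prod_congr rfl fun i hi => by rw [(mem_filter.mp hi).2], prod_const]

theorem ContinuousMultilinearMap.apply_diag_eq_sum_mono {j : ℕ}
    (T : ContinuousMultilinearMap ℝ (fun _ : Fin j => EuclideanSpace ℝ (Fin n)) ℂ)
    (z : EuclideanSpace ℝ (Fin n)) :
    T (fun _ => z) = ∑ r : Fin j → Fin n,
      T (fun i => EuclideanSpace.single (r i) 1) * mono n (fun l => #{i | r i = l}) z := by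
  have hz : z = ∑ l, z l • EuclideanSpace.single l (1 : ℝ) := by
    simpa using ((EuclideanSpace.basisFun (Fin n) ℝ).sum_repr z).symm
  conv_lhs => rw [hz, T.map_sum]
  refine sum_congr rfl fun r _ => ?_
  rw [T.map_smul_univ, ← prod_apply_comp_eq_mono, Complex.real_smul, mul_comm]

namespace VanishingMoments

variable {k : ℕ} {f : EuclideanSpace ℝ (Fin n) → ℂ}

theorem integrable_mul_multilinear (hf : VanishingMoments n k f) {j : ℕ} (hj : j < k)
    (T : ContinuousMultilinearMap ℝ (fun _ : Fin j => EuclideanSpace ℝ (Fin n)) ℂ) :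
    Integrable fun z => f z * T (fun _ => z) := by
  simp_rw [T.apply_diag_eq_sum_mono, mul_sum, mul_left_comm (f _)]
  exact integrable_finsetSum _ fun r _ =>
    ((hf _ (by rwa [sum_card_fiber_eq])).1).const_mul _

theorem integral_mul_multilinear (hf : VanishingMoments n k f) {j : ℕ} (hj : j < k)
    (T : ContinuousMultilinearMap ℝ (fun _ : Fin j => EuclideanSpace ℝ (Fin n)) ℂ) :
    ∫ z, f z * T (fun _ => z) = 0 := by
  simp_rw [T.apply_diag_eq_sum_mono, mul_sum, mul_left_comm (f _)]
  rw [integral_finsetSum _ fun r _ => ((hf _ (by rwa [sum_card_fiber_eq])).1).const_mul _]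
  exact sum_eq_zero fun r _ => by
    rw [integral_const_mul, (hf _ (by rwa [sum_card_fiber_eq])).2, mul_zero]

theorem integrable_mul_taylorSum (hf : VanishingMoments n k f)
    (g : EuclideanSpace ℝ (Fin n) → ℂ) (x : EuclideanSpace ℝ (Fin n)) (c : ℝ) :
    Integrable fun z => f z * taylorSum g k x (c • z) := by
  simp_rw [taylorSum_smul, mul_sum, mul_smul_comm, Complex.real_smul]
  exact integrable_finsetSum _ fun j hj =>
    (hf.integrable_mul_multilinear (mem_range.mp hj) _).const_mul _

theorem integral_mul_taylorSum (hf : VanishingMoments n k f)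
    (g : EuclideanSpace ℝ (Fin n) → ℂ) (x : EuclideanSpace ℝ (Fin n)) (c : ℝ) :
    ∫ z, f z * taylorSum g k x (c • z) = 0 := by
  simp_rw [taylorSum_smul, mul_sum, mul_smul_comm, Complex.real_smul]
  rw [integral_finsetSum _ fun j hj =>
    (hf.integrable_mul_multilinear (mem_range.mp hj) _).const_mul _]
  exact sum_eq_zero fun j hj => by
    rw [integral_const_mul, hf.integral_mul_multilinear (mem_range.mp hj), mul_zero]

end VanishingMoments

end Euclidean

theorem decay_conv_b_general (n N k : ℕ)
    (f g : EuclideanSpace ℝ (Fin n) → ℂ)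
    (hg : ContDiff ℝ k g) (Cg : ℝ)
    (hgd : ∀ i : ℕ, i ≤ k → ∀ x, ‖iteratedFDeriv ℝ i g x‖ ≤ Cg * (1 + ‖x‖) ^ (-(N : ℝ)))
    (hfm : Measurable f) (hfmom : VanishingMoments n k f) (Cf : ℝ)
    (hfd : ∀ x, ‖f x‖ ≤ Cf * (1 + ‖x‖) ^ (-((N : ℝ) + k + n + 1))) :
    ∃ C : ℝ, ∀ (x : EuclideanSpace ℝ (Fin n)) (t : ℝ), 1 < t →
      ‖conv n g (dil n t f) x‖ ≤ C * t ^ (-(k : ℝ)) * (1 + ‖x‖) ^ (-(N : ℝ)) := by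
  have hweight : Integrable fun z : EuclideanSpace ℝ (Fin n) => (1 + ‖z‖) ^ (-((n : ℝ) + 1)) :=
    integrable_one_add_norm (by simp)
  refine ⟨Cf * Cg * ∫ z : EuclideanSpace ℝ (Fin n), (1 + ‖z‖) ^ (-((n : ℝ) + 1)),
    fun x t ht => ?_⟩
  have ht0 : 0 < t := one_pos.trans ht
  set T := fun z => f z * taylorSum g k x ((-t⁻¹) • z)
  set R := fun z => f z * (g (x - t⁻¹ • z) - taylorSum g k x ((-t⁻¹) • z))
  have hbound : ∀ z, ‖R z‖ ≤
      Cf * Cg * t ^ (-(k : ℝ)) * (1 + ‖x‖) ^ (-(N : ℝ)) * (1 + ‖z‖) ^ (-((n : ℝ) + 1)) := by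
    intro z
    rw [Real.rpow_neg ht0.le, Real.rpow_natCast, ← inv_pow]
    exact norm_mul_sub_taylorSum_le hg N.cast_nonneg (inv_nonneg.2 ht0.le)
      (inv_le_one_of_one_le₀ ht.le) (hgd k le_rfl)
      (fun z => by simpa only [add_assoc] using hfd z) x z
  have hT : Integrable T := hfmom.integrable_mul_taylorSum g x _
  have hR : Integrable R := by
    refine (hweight.const_mul _).mono' ?_ (ae_of_all _ hbound)
    have hgx : Continuous fun z => g (x - t⁻¹ • z) := by fun_prop
    refine ((hfm.aestronglyMeasurable.mul hgx.aestronglyMeasurable).sub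
      hT.aestronglyMeasurable).congr (ae_of_all _ fun z => ?_)
    simp only [R, T, Pi.sub_apply, Pi.mul_apply, mul_sub]
  have hsplit : ∫ z, f z * g (x - t⁻¹ • z) = ∫ z, R z + T z := by
    congr 1; ext z; simp only [R, T]; ring
  rw [conv_dil_apply f g ht0, hsplit, integral_add hR hT, hfmom.integral_mul_taylorSum,
    add_zero]
  refine (norm_integral_le_of_norm_le (hweight.const_mul _) (ae_of_all _ hbound)).trans_eq ?_
  rw [integral_const_mul]
  ring

/-- Lemma 3.2(b) of Führ–Mayeli, Euclidean case: if all partial derivatives of `g` up to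
order `k` have polynomial decay of order `N`, and `f` has vanishing moments of order `k`
and polynomial decay of order `N + k + n + 1`, then
`|(g * D_t f)(x)| ≤ C t^{−k} (1 + |x|)^{−N}` for all `x` and all `t > 1`. -/
theorem decay_conv_b (n N k : ℕ) (hk : 1 ≤ k)
    (f g : EuclideanSpace ℝ (Fin n) → ℂ)
    (hg : ContDiff ℝ k g) (Cg : ℝ)
    (hgd : ∀ i : ℕ, i ≤ k → ∀ x, ‖iteratedFDeriv ℝ i g x‖ ≤ Cg * (1 + ‖x‖) ^ (-(N : ℝ)))
    (hfm : Measurable f) (hfmom : VanishingMoments n k f) (Cf : ℝ)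
    (hfd : ∀ x, ‖f x‖ ≤ Cf * (1 + ‖x‖) ^ (-((N : ℝ) + k + n + 1))) :
    ∃ C : ℝ, ∀ (x : EuclideanSpace ℝ (Fin n)) (t : ℝ), 1 < t →
      ‖conv n g (dil n t f) x‖ ≤ C * t ^ (-(k : ℝ)) * (1 + ‖x‖) ^ (-(N : ℝ)) :=
  decay_conv_b_general n N k f g hg Cg hgd hfm hfmom Cf hfd
end

section
/- Let 1 ≤ p < ∞, K ∈ 𝓢(ℝⁿ), 0 < ε < 1, and let U be a neighborhood of 0 in ℝⁿ with ‖osc_U K‖_{L¹} ≤ ε. Let Γ ⊂ ℝⁿ be a regular sampling set with a Γ-tile W ⊆ U. Then for every continuous f ∈ L^p(ℝⁿ) satisfying f(x) = (f * K)(x) for all x, the restriction (f(γ))_{γ∈Γ} belongs to ℓ^p(Γ) and satisfies the sampling inequalities |W|^{−1/p}(1−ε)‖f‖_{L^p} ≤ ‖(f(γ))_{γ∈Γ}‖_{ℓ^p(Γ)} ≤ |W|^{−1/p}(1+ε)‖f‖_{L^p}, where |W| denotes the Lebesgue measure of W. -/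
/-!
For `x` in the tile `γ + W` we have `x - γ ∈ U`, so the reproducing identity `f = f * K` gives
`|f γ - f x| ≤ ∫ |f y| |K (x - y) - K (γ - y)| dy ≤ (|f| * osc_U K) x =: C x`.
Hence the step function `g = ∑ γ, |f γ| 𝟙_{γ + W}`, whose `p`-th power integrates to
`|W| ∑ γ, |f γ|^p`, satisfies `g ≤ |f| + C` and `|f| ≤ g + C` almost everywhere, and Young's
inequality gives `‖C‖_p ≤ ‖osc_U K‖₁ ‖f‖_p ≤ ε ‖f‖_p`. Minkowski's inequality then yields
`|‖g‖_p - ‖f‖_p| ≤ ε ‖f‖_p`.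
-/

open MeasureTheory
open scoped ENNReal

/-- `Γ` is a regular sampling set of `ℝⁿ` with `Γ`-tile `W`: `Γ` is countable, `W` is a
relatively compact (= bounded) Borel neighborhood of `0`, the translates `γ + W` cover
`ℝⁿ` up to a null set, and any two distinct translates overlap in a null set. -/
def IsRegSampling (n : ℕ) (Γ W : Set (EuclideanSpace ℝ (Fin n))) : Prop :=
  Γ.Countable ∧ MeasurableSet W ∧ W ∈ nhds (0 : EuclideanSpace ℝ (Fin n)) ∧
    Bornology.IsBounded W ∧
    volume ((Set.univ : Set (EuclideanSpace ℝ (Fin n))) \ ⋃ γ ∈ Γ, (γ + ·) '' W) = 0 ∧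
    Γ.Pairwise fun γ γ' => volume (((γ + ·) '' W) ∩ ((γ' + ·) '' W)) = 0

section Young

variable {G : Type*} [MeasurableSpace G] [AddGroup G] [MeasurableAdd₂ G] [MeasurableNeg G]
  {μ : Measure G} {p : ℝ} {Φ F : G → ℝ≥0∞}

/-- Hölder's inequality against the weight `Φ`, i.e. Jensen for the measure `Φ μ`. -/
theorem lconvolution_rpow_le (hp : 1 ≤ p) (hΦ : AEMeasurable Φ μ) (hF : Measurable F) (x : G) :
    (Φ ⋆ₗ[μ] F) x ^ p ≤ (∫⁻ y, Φ y * F (-y + x) ^ p ∂μ) * (∫⁻ y, Φ y ∂μ) ^ (p - 1) := by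
  have hp0 : 0 < p := by linarith
  have hq : 0 ≤ 1 - 1 / p := sub_nonneg.2 ((div_le_one hp0).2 hp)
  have hweight : ∀ y, (Φ y * F (-y + x) ^ p) ^ (1 / p) * Φ y ^ (1 - 1 / p) = Φ y * F (-y + x) := by
    intro y
    rw [ENNReal.mul_rpow_of_nonneg _ _ (by positivity), ← ENNReal.rpow_mul,
      mul_one_div_cancel hp0.ne', ENNReal.rpow_one, mul_right_comm,
      ← ENNReal.rpow_add_of_nonneg _ _ (by positivity) hq, add_sub_cancel, ENNReal.rpow_one]
  have holder := ENNReal.lintegral_mul_norm_pow_le (μ := μ)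
    (f := fun y => Φ y * F (-y + x) ^ p) (by fun_prop) hΦ (by positivity) hq (add_sub_cancel _ _)
  simp only [hweight] at holder
  calc (Φ ⋆ₗ[μ] F) x ^ p
      ≤ ((∫⁻ y, Φ y * F (-y + x) ^ p ∂μ) ^ (1 / p) * (∫⁻ y, Φ y ∂μ) ^ (1 - 1 / p)) ^ p :=
        ENNReal.rpow_le_rpow holder hp0.le
    _ = (∫⁻ y, Φ y * F (-y + x) ^ p ∂μ) * (∫⁻ y, Φ y ∂μ) ^ (p - 1) := by
        rw [ENNReal.mul_rpow_of_nonneg _ _ hp0.le, ← ENNReal.rpow_mul, ← ENNReal.rpow_mul,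
          one_div_mul_cancel hp0.ne', ENNReal.rpow_one, sub_mul, one_mul,
          one_div_mul_cancel hp0.ne']

variable [μ.IsAddLeftInvariant] [SFinite μ]

theorem lintegral_lconvolution_rpow_le (hp : 1 ≤ p) (hΦ : Measurable Φ) (hF : Measurable F) :
    ∫⁻ x, (Φ ⋆ₗ[μ] F) x ^ p ∂μ ≤ (∫⁻ x, Φ x ∂μ) ^ p * ∫⁻ x, F x ^ p ∂μ := by
  have hprod : Measurable fun z : G × G => Φ z.2 * F (-z.2 + z.1) ^ p := by fun_prop
  calc ∫⁻ x, (Φ ⋆ₗ[μ] F) x ^ p ∂μ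
      ≤ ∫⁻ x, (∫⁻ y, Φ y * F (-y + x) ^ p ∂μ) * (∫⁻ y, Φ y ∂μ) ^ (p - 1) ∂μ :=
        lintegral_mono fun x => lconvolution_rpow_le hp hΦ.aemeasurable hF x
    _ = (∫⁻ y, Φ y * ∫⁻ x, F (-y + x) ^ p ∂μ ∂μ) * (∫⁻ y, Φ y ∂μ) ^ (p - 1) := by
        rw [lintegral_mul_const _ hprod.lintegral_prod_right',
          lintegral_lintegral_swap (f := fun x y => Φ y * F (-y + x) ^ p) hprod.aemeasurable]
        exact congrArg (· * _) <| lintegral_congr fun y =>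
          lintegral_const_mul _ ((hF.comp (measurable_const_add (-y))).pow_const p)
    _ = (∫⁻ x, Φ x ∂μ) ^ p * ∫⁻ x, F x ^ p ∂μ := by
        have hpow : (∫⁻ x, Φ x ∂μ) ^ (p - 1) * ∫⁻ x, Φ x ∂μ = (∫⁻ x, Φ x ∂μ) ^ p := by
          conv_rhs => rw [← sub_add_cancel p 1]
          rw [ENNReal.rpow_add_of_nonneg _ _ (by linarith) zero_le_one, ENNReal.rpow_one]
        simp_rw [lintegral_add_left_eq_self (fun z => F z ^ p)]
        rw [lintegral_mul_const _ hΦ, ← hpow]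
        ring

end Young

theorem eLpNorm_lconvolution_le {G : Type*} [MeasurableSpace G] [AddCommGroup G]
    [MeasurableAdd₂ G] [MeasurableNeg G] {μ : Measure G} [μ.IsAddLeftInvariant]
    [μ.IsNegInvariant] [SFinite μ] {p : ℝ≥0∞} (hp : 1 ≤ p) (hp_top : p ≠ ∞)
    {F Φ : G → ℝ≥0∞} (hF : Measurable F) (hΦ : Measurable Φ) :
    eLpNorm (F ⋆ₗ[μ] Φ) p μ ≤ (∫⁻ x, Φ x ∂μ) * eLpNorm F p μ := by
  have hp0 : 0 < p.toReal := ENNReal.toReal_pos (by positivity) hp_top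
  have hp1 : 1 ≤ p.toReal := by simpa using ENNReal.toReal_mono hp_top hp
  simp only [eLpNorm_eq_lintegral_rpow_enorm_toReal (by positivity) hp_top, enorm_eq_self]
  rw [lconvolution_comm]
  calc (∫⁻ x, (Φ ⋆ₗ[μ] F) x ^ p.toReal ∂μ) ^ (1 / p.toReal)
      ≤ ((∫⁻ x, Φ x ∂μ) ^ p.toReal * ∫⁻ x, F x ^ p.toReal ∂μ) ^ (1 / p.toReal) :=
        ENNReal.rpow_le_rpow (lintegral_lconvolution_rpow_le hp1 hΦ hF) (by positivity)
    _ = (∫⁻ x, Φ x ∂μ) * (∫⁻ x, F x ^ p.toReal ∂μ) ^ (1 / p.toReal) := by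
        rw [ENNReal.mul_rpow_of_nonneg _ _ (by positivity), ← ENNReal.rpow_mul,
          mul_one_div_cancel hp0.ne', ENNReal.rpow_one]

theorem eLpNorm_le_add_of_ae_le {α : Type*} [MeasurableSpace α] {μ : Measure α} {p : ℝ≥0∞}
    (hp : 1 ≤ p) {f g h : α → ℝ≥0∞} (hg : AEMeasurable g μ) (hh : AEMeasurable h μ)
    (hfgh : ∀ᵐ x ∂μ, f x ≤ g x + h x) : eLpNorm f p μ ≤ eLpNorm g p μ + eLpNorm h p μ :=
  (eLpNorm_mono_enorm_ae (by simpa only [enorm_eq_self, Pi.add_apply] using hfgh)).trans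
    (eLpNorm_add_le hg.aestronglyMeasurable hh.aestronglyMeasurable hp)

section Tiling

variable {G : Type*} [AddGroup G] [MeasurableSpace G] {μ : Measure G} {Γ W : Set G}

noncomputable def tileStep (Γ W : Set G) (c : G → ℝ≥0∞) (x : G) : ℝ≥0∞ :=
  ∑' γ : Γ, (((γ : G) + ·) '' W).indicator (fun _ => c γ) x

theorem ae_tileStep_eq (hΓ : Γ.Countable) (hcover : μ (Set.univ \ ⋃ γ ∈ Γ, (γ + ·) '' W) = 0)
    (hdisj : Γ.Pairwise fun γ γ' => μ (((γ + ·) '' W) ∩ ((γ' + ·) '' W)) = 0) :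
    ∀ᵐ x ∂μ, ∃ γ ∈ Γ, x ∈ (γ + ·) '' W ∧ ∀ c, tileStep Γ W c x = c γ := by
  have : Countable Γ := hΓ.to_subtype
  have hmem : ∀ᵐ x ∂μ, x ∈ ⋃ γ ∈ Γ, (γ + ·) '' W := by
    filter_upwards [measure_eq_zero_iff_ae_notMem.1 hcover] with x hx
    simpa using hx
  have hsep : ∀ᵐ x ∂μ, ∀ γ γ' : Γ, γ ≠ γ' →
      x ∉ (((γ : G) + ·) '' W) ∩ (((γ' : G) + ·) '' W) := by
    simp only [ae_all_iff]
    exact fun γ γ' hne =>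
      measure_eq_zero_iff_ae_notMem.1 (hdisj γ.2 γ'.2 (Subtype.coe_ne_coe.2 hne))
  filter_upwards [hmem, hsep] with x hx hx'
  obtain ⟨γ, hγ, hxγ⟩ := Set.mem_iUnion₂.1 hx
  refine ⟨γ, hγ, hxγ, fun c => ?_⟩
  rw [tileStep, tsum_eq_single ⟨γ, hγ⟩ fun γ' hne =>
    Set.indicator_of_notMem (fun h => hx' γ' _ hne ⟨h, hxγ⟩) _]
  exact Set.indicator_of_mem hxγ _

theorem ae_tileStep_enorm_le {E : Type*} [SeminormedAddCommGroup E] (hΓ : Γ.Countable)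
    (hcover : μ (Set.univ \ ⋃ γ ∈ Γ, (γ + ·) '' W) = 0)
    (hdisj : Γ.Pairwise fun γ γ' => μ (((γ + ·) '' W) ∩ ((γ' + ·) '' W)) = 0)
    {f : G → E} {C : G → ℝ≥0∞} (hC : ∀ γ ∈ Γ, ∀ x ∈ (γ + ·) '' W, ‖f γ - f x‖ₑ ≤ C x) :
    ∀ᵐ x ∂μ, tileStep Γ W (‖f ·‖ₑ) x ≤ ‖f x‖ₑ + C x ∧
      ‖f x‖ₑ ≤ tileStep Γ W (‖f ·‖ₑ) x + C x := by
  filter_upwards [ae_tileStep_eq hΓ hcover hdisj] with x ⟨γ, hγ, hx, hstep⟩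
  rw [hstep]
  have hfx := hC γ hγ x hx
  constructor
  · calc ‖f γ‖ₑ ≤ ‖f x‖ₑ + ‖f γ - f x‖ₑ := by
          simpa [add_comm] using enorm_sub_le (a := f γ - f x) (b := -f x)
      _ ≤ ‖f x‖ₑ + C x := by gcongr
  · calc ‖f x‖ₑ ≤ ‖f γ‖ₑ + ‖f γ - f x‖ₑ := by
          simpa [enorm_sub_rev, add_comm] using enorm_sub_le (a := f x - f γ) (b := -f γ)
      _ ≤ ‖f γ‖ₑ + C x := by gcongr

variable [MeasurableAdd G]

theorem MeasurableSet.image_const_add (hW : MeasurableSet W) (γ : G) :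
    MeasurableSet ((γ + ·) '' W) := by
  rw [Set.image_add_left]
  exact measurable_const_add (-γ) hW

theorem measurable_tileStep (hΓ : Γ.Countable) (hW : MeasurableSet W) (c : G → ℝ≥0∞) :
    Measurable (tileStep Γ W c) :=
  have : Countable Γ := hΓ.to_subtype
  .tsum fun γ : Γ => measurable_const.indicator (hW.image_const_add γ)

variable [μ.IsAddLeftInvariant]

theorem lintegral_tileStep (hΓ : Γ.Countable) (hW : MeasurableSet W) (c : G → ℝ≥0∞) :
    ∫⁻ x, tileStep Γ W c x ∂μ = (∑' γ : Γ, c γ) * μ W := by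
  have : Countable Γ := hΓ.to_subtype
  simp only [tileStep]
  rw [lintegral_tsum fun γ : Γ =>
    (measurable_const.indicator (hW.image_const_add γ)).aemeasurable, ← ENNReal.tsum_mul_right]
  refine tsum_congr fun γ => ?_
  rw [lintegral_indicator_const (hW.image_const_add γ), Set.image_add_left, measure_preimage_add]

theorem eLpNorm_tileStep {p : ℝ} (hp : 0 < p) (hΓ : Γ.Countable) (hW : MeasurableSet W)
    (hcover : μ (Set.univ \ ⋃ γ ∈ Γ, (γ + ·) '' W) = 0)
    (hdisj : Γ.Pairwise fun γ γ' => μ (((γ + ·) '' W) ∩ ((γ' + ·) '' W)) = 0)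
    (c : G → ℝ≥0∞) :
    eLpNorm (tileStep Γ W c) (ENNReal.ofReal p) μ = ((∑' γ : Γ, c γ ^ p) * μ W) ^ (1 / p) := by
  rw [eLpNorm_eq_lintegral_rpow_enorm_toReal (by simpa using hp) ENNReal.ofReal_ne_top,
    ENNReal.toReal_ofReal hp.le, ← lintegral_tileStep hΓ hW fun z => c z ^ p]
  congr 1
  refine lintegral_congr_ae ?_
  filter_upwards [ae_tileStep_eq hΓ hcover hdisj] with x ⟨γ, _, _, hstep⟩
  rw [enorm_eq_self, hstep, hstep]

end Tiling

section Oscillation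

variable {G E : Type*} [AddGroup G] [SeminormedAddCommGroup E]

noncomputable def osc (U : Set G) (K : G → E) (x : G) : ℝ≥0∞ :=
  ⨆ y ∈ U, ‖K x - K (x - y)‖ₑ

theorem measurable_osc [TopologicalSpace G] [ContinuousSub G] [MeasurableSpace G]
    [OpensMeasurableSpace G] {U : Set G} {K : G → E} (hK : Continuous K) :
    Measurable (osc U K) :=
  (lowerSemicontinuous_biSup fun _ _ =>
    (hK.sub (hK.comp (continuous_id.sub continuous_const))).enorm.lowerSemicontinuous
    ).measurable

end Oscillation

theorem integrable_mul_schwartz_comp_sub {G : Type*} [NormedAddCommGroup G] [NormedSpace ℝ G]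
    [MeasurableSpace G] [BorelSpace G] [SecondCountableTopology G] {μ : Measure G}
    [μ.HasTemperateGrowth] [μ.IsAddLeftInvariant] [μ.IsNegInvariant] {p : ℝ≥0∞} (hp : 1 ≤ p)
    {f : G → ℂ} (hf : MemLp f p μ) (K : SchwartzMap G ℂ) (z : G) :
    Integrable (fun y => f y * K (z - y)) μ :=
  have := ENNReal.HolderConjugate.conjExponent hp
  hf.integrable_mul ((K.memLp p.conjExponent μ).comp_measurePreserving
    (Measure.measurePreserving_sub_left μ z))

theorem enorm_sub_le_lconvolution_osc {n : ℕ} {f K : EuclideanSpace ℝ (Fin n) → ℂ}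
    {U : Set (EuclideanSpace ℝ (Fin n))} (hint : ∀ z, Integrable (fun y => f y * K (z - y)))
    (hrep : ∀ x, f x = conv n f K x) {γ x : EuclideanSpace ℝ (Fin n)} (hxγ : x - γ ∈ U) :
    ‖f γ - f x‖ₑ ≤ ((fun y => ‖f y‖ₑ) ⋆ₗ osc U K) x := by
  rw [hrep γ, hrep x]
  unfold conv
  rw [← integral_sub (hint γ) (hint x)]
  refine (enorm_integral_le_lintegral_enorm _).trans (lintegral_mono fun y => ?_)
  rw [← mul_sub, enorm_mul, neg_add_eq_sub]
  gcongr
  rw [← enorm_neg, neg_sub, show γ - y = x - y - (x - γ) by abel]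
  exact le_iSup₂ (f := fun u (_ : u ∈ U) => ‖K (x - y) - K (x - y - u)‖ₑ) (x - γ) hxγ

theorem summable_norm_rpow_and_tsum_eq_toReal {ι E : Type*} [SeminormedAddGroup E]
    {c : ι → E} {p : ℝ} (h : ∑' i, ‖c i‖ₑ ^ p ≠ ∞) :
    Summable (fun i => ‖c i‖ ^ p) ∧ ∑' i, ‖c i‖ ^ p = (∑' i, ‖c i‖ₑ ^ p).toReal := by
  have hterm : ∀ i, (‖c i‖ₑ ^ p).toReal = ‖c i‖ ^ p := fun i => by
    rw [← ENNReal.toReal_rpow, toReal_enorm]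
  refine ⟨by simpa only [hterm] using ENNReal.summable_toReal h, ?_⟩
  rw [ENNReal.tsum_toReal_eq (ENNReal.ne_top_of_tsum_ne_top h)]
  simp only [hterm]

theorem toReal_rpow_bounds_of_le_add {p ε : ℝ} (hp : 0 < p) (hε : 0 ≤ ε) {T w N : ℝ≥0∞}
    (hw0 : w ≠ 0) (hw : w ≠ ∞) (hN : N ≠ ∞)
    (hup : (T * w) ^ (1 / p) ≤ N + ENNReal.ofReal ε * N)
    (hlow : N ≤ (T * w) ^ (1 / p) + ENNReal.ofReal ε * N) :
    T ≠ ∞ ∧ w.toReal ^ (-(1 / p)) * (1 - ε) * N.toReal ≤ T.toReal ^ (1 / p) ∧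
      T.toReal ^ (1 / p) ≤ w.toReal ^ (-(1 / p)) * (1 + ε) * N.toReal := by
  have hTw : (T * w) ^ (1 / p) ≠ ∞ := ne_top_of_le_ne_top (by finiteness) hup
  have hT : T ≠ ∞ := by
    intro hT
    simp [hT, hw0, hp] at hTw
  have hsplit : ((T * w) ^ (1 / p)).toReal = T.toReal ^ (1 / p) * w.toReal ^ (1 / p) := by
    rw [← ENNReal.toReal_rpow, ENNReal.toReal_mul, Real.mul_rpow (by positivity) (by positivity)]
  have hup' := ENNReal.toReal_mono (by finiteness) hup
  have hlow' := ENNReal.toReal_mono (by finiteness) hlow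
  rw [ENNReal.toReal_add (by finiteness) (by finiteness), ENNReal.toReal_mul,
    ENNReal.toReal_ofReal hε, hsplit] at hup' hlow'
  have hv : 0 < w.toReal ^ (1 / p) := Real.rpow_pos_of_pos (ENNReal.toReal_pos hw0 hw) _
  rw [Real.rpow_neg (by positivity)]
  refine ⟨hT, ?_, ?_⟩
  · rw [mul_assoc, inv_mul_le_iff₀ hv]
    linarith
  · rw [mul_assoc, le_inv_mul_iff₀ hv]
    linarith

theorem sampling_inequality_Lp_general (n : ℕ) (p : ℝ) (hp : 1 ≤ p)
    (K : SchwartzMap (EuclideanSpace ℝ (Fin n)) ℂ)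
    (ε : ℝ) (hε0 : 0 < ε)
    (U : Set (EuclideanSpace ℝ (Fin n)))
    (hosc : (∫⁻ x, ⨆ y ∈ U, (‖K x - K (x - y)‖₊ : ℝ≥0∞)) ≤ ENNReal.ofReal ε)
    (Γ W : Set (EuclideanSpace ℝ (Fin n))) (hreg : IsRegSampling n Γ W) (hWU : W ⊆ U)
    (f : EuclideanSpace ℝ (Fin n) → ℂ) (hfc : Continuous f)
    (hfLp : MemLp f (ENNReal.ofReal p) volume)
    (hrep : ∀ x, f x = conv n f (⇑K) x) :
    Summable (fun γ : Γ => ‖f (γ : EuclideanSpace ℝ (Fin n))‖ ^ p) ∧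
    (volume W).toReal ^ (-(1 / p)) * (1 - ε) *
        (eLpNorm f (ENNReal.ofReal p) volume).toReal ≤
      (∑' γ : Γ, ‖f (γ : EuclideanSpace ℝ (Fin n))‖ ^ p) ^ (1 / p) ∧
    (∑' γ : Γ, ‖f (γ : EuclideanSpace ℝ (Fin n))‖ ^ p) ^ (1 / p) ≤
      (volume W).toReal ^ (-(1 / p)) * (1 + ε) *
        (eLpNorm f (ENNReal.ofReal p) volume).toReal := by
  obtain ⟨hΓ, hWm, hW0, hWb, hcover, hdisj⟩ := hreg
  have hq : 1 ≤ ENNReal.ofReal p := ENNReal.one_le_ofReal.2 hp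
  have hF : Measurable fun x => ‖f x‖ₑ := hfc.measurable.enorm
  have hΦ : Measurable (osc U K) := measurable_osc K.continuous
  have hC : Measurable ((‖f ·‖ₑ) ⋆ₗ osc U K) := measurable_lconvolution _ hF hΦ
  have hCf : eLpNorm ((‖f ·‖ₑ) ⋆ₗ osc U K) (ENNReal.ofReal p) volume ≤
      ENNReal.ofReal ε * eLpNorm f (ENNReal.ofReal p) volume := by
    rw [← eLpNorm_enorm f]
    exact (eLpNorm_lconvolution_le hq ENNReal.ofReal_ne_top hF hΦ).trans (by gcongr; exact hosc)
  have htile : ∀ γ ∈ Γ, ∀ x ∈ (γ + ·) '' W, ‖f γ - f x‖ₑ ≤ ((‖f ·‖ₑ) ⋆ₗ osc U K) x := by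
    rintro γ - x ⟨w, hw, rfl⟩
    exact enorm_sub_le_lconvolution_osc (integrable_mul_schwartz_comp_sub hq hfLp K) hrep
      (hWU (by simpa using hw))
  have hsample := ae_tileStep_enorm_le (μ := volume) hΓ hcover hdisj htile
  have hup := (eLpNorm_le_add_of_ae_le hq hF.aemeasurable hC.aemeasurable
    (hsample.mono fun x hx => hx.1)).trans (add_le_add le_rfl hCf)
  have hlow := (eLpNorm_le_add_of_ae_le hq (measurable_tileStep hΓ hWm _).aemeasurable
    hC.aemeasurable (hsample.mono fun x hx => hx.2)).trans (add_le_add le_rfl hCf)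
  rw [eLpNorm_enorm, eLpNorm_tileStep (by linarith) hΓ hWm hcover hdisj] at hup hlow
  obtain ⟨hT, hlow', hup'⟩ := toReal_rpow_bounds_of_le_add (by linarith) hε0.le
    (Measure.measure_pos_of_mem_nhds volume hW0).ne' hWb.measure_lt_top.ne hfLp.eLpNorm_ne_top
    hup hlow
  obtain ⟨hsum, htsum⟩ := summable_norm_rpow_and_tsum_eq_toReal hT
  exact ⟨hsum, htsum ▸ hlow', htsum ▸ hup'⟩

/-- Proposition 5.6 of Führ–Mayeli (Euclidean case, `p < ∞`): if `f ∈ L^p` is continuous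
and reproduced by convolution with the Schwartz kernel `K`, `‖osc_U K‖₁ ≤ ε < 1`, and
`Γ` is a regular sampling set with a `Γ`-tile `W ⊆ U`, then the samples `(f(γ))_{γ∈Γ}`
lie in `ℓ^p(Γ)` and satisfy
`|W|^{−1/p}(1−ε)‖f‖_p ≤ ‖(f(γ))_γ‖_{ℓ^p} ≤ |W|^{−1/p}(1+ε)‖f‖_p`. -/
theorem sampling_inequality_Lp (n : ℕ) (p : ℝ) (hp : 1 ≤ p)
    (K : SchwartzMap (EuclideanSpace ℝ (Fin n)) ℂ)
    (ε : ℝ) (hε0 : 0 < ε) (hε1 : ε < 1)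
    (U : Set (EuclideanSpace ℝ (Fin n))) (hU : U ∈ nhds (0 : EuclideanSpace ℝ (Fin n)))
    (hosc : (∫⁻ x, ⨆ y ∈ U, (‖K x - K (x - y)‖₊ : ℝ≥0∞)) ≤ ENNReal.ofReal ε)
    (Γ W : Set (EuclideanSpace ℝ (Fin n))) (hreg : IsRegSampling n Γ W) (hWU : W ⊆ U)
    (f : EuclideanSpace ℝ (Fin n) → ℂ) (hfc : Continuous f)
    (hfLp : MemLp f (ENNReal.ofReal p) volume)
    (hrep : ∀ x, f x = conv n f (⇑K) x) :
    Summable (fun γ : Γ => ‖f (γ : EuclideanSpace ℝ (Fin n))‖ ^ p) ∧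
    (volume W).toReal ^ (-(1 / p)) * (1 - ε) *
        (eLpNorm f (ENNReal.ofReal p) volume).toReal ≤
      (∑' γ : Γ, ‖f (γ : EuclideanSpace ℝ (Fin n))‖ ^ p) ^ (1 / p) ∧
    (∑' γ : Γ, ‖f (γ : EuclideanSpace ℝ (Fin n))‖ ^ p) ^ (1 / p) ≤
      (volume W).toReal ^ (-(1 / p)) * (1 + ε) *
        (eLpNorm f (ENNReal.ofReal p) volume).toReal :=
  sampling_inequality_Lp_general n p hp K ε hε0 U hosc Γ W hreg hWU f hfc hfLp hrep
end
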